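/- arXiv:1206.4750 — 5 statements merged into one kernel-verified Lean document; each statement's English description precedes it below -/
import Mathlib

section
/- Let G be a group, X a set, and {◁_g : X × X → X}_{g∈G} a family of binary operations satisfying the four G-family axioms. Then the associated operation on X × G defined by (a,g) ◁ (b,h) = (a ◁_h b, h⁻¹gh) is self-distributive: ((a,g) ◁ (b,h)) ◁ (c,k) = ((a,g) ◁ (c,k)) ◁ ((b,h) ◁ (c,k)) for all (a,g),(b,h),(c,k) ∈ X × G. -/
/-- The associated quandle operation on `X × G` of a `G`-family of operations
`act : G → X → X → X` (where `act g a b` denotes `a ◁_g b`):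
`(a, g) ◁ (b, h) = (a ◁_h b, h⁻¹ * g * h)`. -/
def assocOp {X : Type*} {G : Type*} [Group G] (act : G → X → X → X) :
    X × G → X × G → X × G :=
  fun p q => (act q.2 p.1 q.1, q.2⁻¹ * p.2 * q.2)

theorem assocOp_self_distrib {X : Type*} {G : Type*} [Group G] (act : G → X → X → X)
    (ax1 : ∀ (a : X) (g : G), act g a a = a)
    (ax2 : ∀ (a b : X) (g h : G), act h (act g a b) b = act (g * h) a b)
    (ax3 : ∀ (a b : X), act (1 : G) a b = a)
    (ax4 : ∀ (a b c : X) (g h : G),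
      act h (act g a b) c = act (h⁻¹ * g * h) (act h a c) (act h b c)) :
    ∀ p q r : X × G,
      assocOp act (assocOp act p q) r =
        assocOp act (assocOp act p r) (assocOp act q r) := by
  rintro ⟨a, g⟩ ⟨b, h⟩ ⟨c, k⟩
  simp only [assocOp, Prod.mk.injEq]
  constructor
  · exact ax4 a b c h k
  · group
end

section
/- Let R be a commutative ring and V an R-module, and for each R-linear automorphism M of V define a ◁_M b = M a + b − M b for a,b ∈ V. Then this family of operations, indexed by the group of R-linear automorphisms of V, satisfies all four G-family axioms: (1) a ◁_M a = a; (2) (a ◁_M b) ◁_N b = a ◁_{N∘M} b; (3) a ◁_{id} b = a; (4) (a ◁_M b) ◁_N c = (a ◁_N c) ◁_{N∘M∘N⁻¹} (b ◁_N c), for all a,b,c ∈ V and all R-linear automorphisms M, N of V. -/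
/-- The Alexander-type operation `a ◁_M b = M a + b - M b` on an `R`-module `V`,
indexed by `R`-linear automorphisms `M` of `V`. -/
def linOp {R : Type*} {V : Type*} [CommRing R] [AddCommGroup V] [Module R V]
    (M : V ≃ₗ[R] V) (a b : V) : V :=
  M a + b - M b

/-- The family `{◁_M}`, indexed by the group of `R`-linear automorphisms of `V`
(with multiplication given by composition, `(N * M) x = N (M x)`), satisfies the
four axioms of a `G`-family of quandles. -/
theorem linOp_g_family {R : Type*} {V : Type*} [CommRing R] [AddCommGroup V]
    [Module R V] :
    (∀ (M : V ≃ₗ[R] V) (a : V), linOp M a a = a) ∧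
    (∀ (M N : V ≃ₗ[R] V) (a b : V), linOp N (linOp M a b) b = linOp (N * M) a b) ∧
    (∀ (a b : V), linOp (1 : V ≃ₗ[R] V) a b = a) ∧
    (∀ (M N : V ≃ₗ[R] V) (a b c : V),
      linOp N (linOp M a b) c = linOp (N * M * N⁻¹) (linOp N a c) (linOp N b c)) := by
  refine ⟨fun M a => by simp [linOp], fun M N a b => ?_, fun a b => by simp [linOp],
    fun M N a b c => ?_⟩
  all_goals {
    have hmul : ∀ (P Q : V ≃ₗ[R] V) (x : V), (P * Q) x = P (Q x) := fun _ _ _ => rfl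
    have hinv : ∀ x : V, (N⁻¹ : V ≃ₗ[R] V) x = N.symm x := fun _ => rfl
    simp only [linOp, hmul, hinv, map_add, map_sub, LinearEquiv.apply_symm_apply, LinearEquiv.symm_apply_apply]
    abel }
end

section
/- Define θ : ((ℤ/3) × (ℤ/2))³ → ℤ/3 by θ((x₁,g₁),(x₂,g₂),(x₃,g₃)) = θ₃(x₁,x₂,x₃) if g₁ = g₂ = g₃ = 1, and θ((x₁,g₁),(x₂,g₂),(x₃,g₃)) = 0 otherwise, where θ₃(a,b,c) = (a − b)(c³ + c²b + b²c). Let ◁ denote the associated quandle operation on (ℤ/3) × (ℤ/2): (a,g) ◁ (b,h) = (a ◁_h b, g), where a ◁_0 b = a and a ◁_1 b = 2b − a. Then θ satisfies the quandle 3-cocycle condition: for all p₁, p₂, p₃, p₄ ∈ (ℤ/3) × (ℤ/2), θ(p₁ ◁ p₂, p₃, p₄) + θ(p₁, p₂, p₄) + θ(p₁ ◁ p₄, p₂ ◁ p₄, p₃ ◁ p₄) = θ(p₁, p₃, p₄) + θ(p₁ ◁ p₃, p₂ ◁ p₃, p₄) + θ(p₁, p₂, p₃). -/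
/-- Mochizuki's 3-cocycle `θ₃ : (ℤ/3)³ → ℤ/3`,
`θ₃(a,b,c) = (a - b)(c³ + c²b + b²c)`. -/
def theta3 (a b c : ZMod 3) : ZMod 3 :=
  (a - b) * (c ^ 3 + c ^ 2 * b + b ^ 2 * c)

/-- The `ℤ/2`-family of quandle operations on `ℤ/3`:
`a ◁_0 b = a` and `a ◁_1 b = 2b - a`. -/
def zOp (g : ZMod 2) (a b : ZMod 3) : ZMod 3 :=
  if g = 0 then a else 2 * b - a

/-- The associated quandle operation on `(ℤ/3) × (ℤ/2)`:
`(a, g) ◁ (b, h) = (a ◁_h b, g)`. -/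
def rOp (p q : ZMod 3 × ZMod 2) : ZMod 3 × ZMod 2 :=
  (zOp q.2 p.1 q.1, p.2)

/-- The extended cocycle `θ` on `(ℤ/3) × (ℤ/2)`: it equals `θ₃` on the first
coordinates when all group components are `1`, and `0` otherwise. -/
def theta (p q r : ZMod 3 × ZMod 2) : ZMod 3 :=
  if p.2 = 1 ∧ q.2 = 1 ∧ r.2 = 1 then theta3 p.1 q.1 r.1 else 0

/-- `θ` satisfies the quandle 3-cocycle condition for the associated quandle
on `(ℤ/3) × (ℤ/2)`. -/
theorem theta_cocycle :
    ∀ p₁ p₂ p₃ p₄ : ZMod 3 × ZMod 2,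
      theta (rOp p₁ p₂) p₃ p₄ + theta p₁ p₂ p₄ +
          theta (rOp p₁ p₄) (rOp p₂ p₄) (rOp p₃ p₄) =
        theta p₁ p₃ p₄ + theta (rOp p₁ p₃) (rOp p₂ p₃) p₄ + theta p₁ p₂ p₃ := by
  decide
end

section
/- Define θ : ((ℤ/3) × (ℤ/2))³ → ℤ/3 by θ((x₁,g₁),(x₂,g₂),(x₃,g₃)) = θ₃(x₁,x₂,x₃) if g₁ = g₂ = g₃ = 1 and 0 otherwise, where θ₃(a,b,c) = (a − b)(c³ + c²b + b²c). Then for all x, y, z ∈ ℤ/3, the signed sum θ((x,1),(z,1),(y,0)) + θ((x,1),(y,0),(z,1)) + θ((x,1),(y,1),(x,1)) + θ((x,1),(x,1),(z,1)) + θ((x,1),(z,1),(y,1)) − θ((z,1),(y,0),(y,1)) − θ((x,1),(z,1),(y,1)) − θ((y,0),(z,0),(y,0)) − θ((y,1),(x,1),(y,1)) − θ((z,1),(y,1),(y,1)) + θ((z,1),(x,1),(y,0)) + θ((z,1),(y,0),(x,1)) + θ((z,1),(y,1),(z,1)) + θ((z,1),(z,1),(x,1)) + θ((z,1),(x,1),(y,1))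 − θ((x,1),(y,0),(y,1)) − θ((z,1),(x,1),(y,1)) − θ((y,0),(x,0),(y,0)) − θ((y,1),(z,1),(y,1)) − θ((x,1),(y,1),(y,1)) equals θ₃(x,y,x) − θ₃(y,x,y) + θ₃(z,y,z) − θ₃(y,z,y). -/
/-- The signed sum of cocycle values read off the decker set of the
2-twist-spun foam of the knotted handlebody `5₂` simplifies to
`θ₃(x,y,x) - θ₃(y,x,y) + θ₃(z,y,z) - θ₃(y,z,y)`. -/
theorem decker_set_sum (x y z : ZMod 3) :
    theta (x, 1) (z, 1) (y, 0) + theta (x, 1) (y, 0) (z, 1) +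
        theta (x, 1) (y, 1) (x, 1) + theta (x, 1) (x, 1) (z, 1) +
        theta (x, 1) (z, 1) (y, 1) - theta (z, 1) (y, 0) (y, 1) -
        theta (x, 1) (z, 1) (y, 1) - theta (y, 0) (z, 0) (y, 0) -
        theta (y, 1) (x, 1) (y, 1) - theta (z, 1) (y, 1) (y, 1) +
        theta (z, 1) (x, 1) (y, 0) + theta (z, 1) (y, 0) (x, 1) +
        theta (z, 1) (y, 1) (z, 1) + theta (z, 1) (z, 1) (x, 1) +
        theta (z, 1) (x, 1) (y, 1) - theta (x, 1) (y, 0) (y, 1) -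
        theta (z, 1) (x, 1) (y, 1) - theta (y, 0) (x, 0) (y, 0) -
        theta (y, 1) (z, 1) (y, 1) - theta (x, 1) (y, 1) (y, 1) =
      theta3 x y x - theta3 y x y + theta3 z y z - theta3 y z y := by
  revert x y z
  decide
end

section
/- For all pairwise distinct x, y, z ∈ ℤ/3, one has θ₃(x,y,x) − θ₃(y,x,y) + θ₃(z,y,z) − θ₃(y,z,y) = 2 in ℤ/3, where θ₃(a,b,c) = (a − b)(c³ + c²b + b²c). -/
/-- For pairwise distinct `x, y, z ∈ ℤ/3`, the cocycle invariant contribution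
`θ₃(x,y,x) - θ₃(y,x,y) + θ₃(z,y,z) - θ₃(y,z,y)` equals `2`. -/
theorem invariant_value (x y z : ZMod 3)
    (hxy : x ≠ y) (hyz : y ≠ z) (hxz : x ≠ z) :
    theta3 x y x - theta3 y x y + theta3 z y z - theta3 y z y = 2 := by
  revert x y z; decide
end
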